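/- Let ψ : {1,…,n} → ℂ and let P be the homogeneous operator of degree 0 associated to ψ, i.e. P(e_i) = ψ(i)·e_i for all i. Suppose P is a Rota–Baxter operator of weight 0, i.e. P(x)·P(y) = P(x·P(y) + P(x)·y) for all x, y ∈ A. Suppose there exists an index with ψ nonzero, let t be the least index in {1,…,n} with ψ(t) ≠ 0, and assume t ≤ ⌊n/2⌋. Then for every 1 ≤ i ≤ n: if t divides i then i·ψ(i) = t·ψ(t), and if t does not divide i then ψ(i) = 0. -/
import Mathlib


open Finset

/-- Coordinate space of the `n`-dimensional complex null-filiform associative algebra,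
with respect to the basis `e_1, …, e_n` (coordinate `m : Fin n` corresponds to `e_{m+1}`). -/
abbrev NF (n : ℕ) : Type := Fin n → ℂ

/-- Multiplication of the null-filiform algebra: `e_i · e_j = e_{i+j}` if `i + j ≤ n`
and `e_i · e_j = 0` if `i + j > n`, extended bilinearly. -/
noncomputable def nfMul {n : ℕ} (x y : NF n) : NF n :=
  fun m => ∑ i : Fin n, ∑ j : Fin n,
    if (i : ℕ) + (j : ℕ) + 1 = (m : ℕ) then x i * y j else 0

/-- The basis element `e_k`, for `1 ≤ k ≤ n` (it is `0` if `k = 0` or `k > n`). -/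
noncomputable def nfE (n k : ℕ) : NF n := fun m => if (m : ℕ) + 1 = k then 1 else 0

/-- The `k`-th power (for `k ≥ 1`) of an element of the null-filiform algebra. -/
noncomputable def nfPow {n : ℕ} (x : NF n) : ℕ → NF n
  | 0 => 0
  | 1 => x
  | k + 2 => nfMul (nfPow x (k + 1)) x

lemma nfMul_smul_left {n : ℕ} (c : ℂ) (x y : NF n) :
    nfMul (c • x) y = c • nfMul x y := by
  funext m
  simp [nfMul, Finset.mul_sum, mul_ite, mul_assoc]

lemma nfMul_smul_right {n : ℕ} (c : ℂ) (x y : NF n) :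
    nfMul x (c • y) = c • nfMul x y := by
  funext m
  simp [nfMul, Finset.mul_sum, mul_ite, mul_left_comm]

lemma nfMul_e {n a b : ℕ} (ha1 : 1 ≤ a) (han : a ≤ n) (hb1 : 1 ≤ b) (hbn : b ≤ n) :
    nfMul (nfE n a) (nfE n b) = nfE n (a + b) := by
  funext m
  simp only [nfMul, nfE]
  rw [Finset.sum_eq_single (⟨a - 1, by omega⟩ : Fin n)]
  · rw [Finset.sum_eq_single (⟨b - 1, by omega⟩ : Fin n)]
    · by_cases h : (m : ℕ) + 1 = a + b
      · rw [if_pos (by simp; omega), if_pos (by simp; omega), if_pos (by simp; omega),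
          if_pos h]
        ring
      · rw [if_neg (by simp; omega), if_neg h]
    · intro j _ hj
      have : (j : ℕ) + 1 ≠ b := fun hh => hj (Fin.ext (by simp; omega))
      simp [this]
    · intro h; exact absurd (Finset.mem_univ _) h
  · intro i _ hi
    apply Finset.sum_eq_zero
    intro j _
    have : (i : ℕ) + 1 ≠ a := fun hh => hi (Fin.ext (by simp; omega))
    simp [this]
  · intro h; exact absurd (Finset.mem_univ _) h

lemma nfE_self {n k : ℕ} (hk1 : 1 ≤ k) (hkn : k ≤ n) :
    nfE n k ⟨k - 1, by omega⟩ = 1 := by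
  simp [nfE]; omega

/-- Rota–Baxter operator of weight `0`, homogeneous of degree `0`, case (a):
if `t` is the least index with `ψ(t) ≠ 0` and `t ≤ ⌊n/2⌋`, then `i·ψ(i) = t·ψ(t)`
when `t ∣ i`, and `ψ(i) = 0` otherwise. -/
theorem rota_baxter_weight0_degree0_case_a (n : ℕ) (hn : 1 ≤ n) (ψ : ℕ → ℂ)
    (P : NF n →ₗ[ℂ] NF n)
    (hP : ∀ i, 1 ≤ i → i ≤ n → P (nfE n i) = ψ i • nfE n i)
    (hRB : ∀ x y : NF n,
      nfMul (P x) (P y) = P (nfMul x (P y) + nfMul (P x) y))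
    (t : ℕ) (ht1 : 1 ≤ t) (htn : t ≤ n) (hψt : ψ t ≠ 0)
    (hleast : ∀ s, 1 ≤ s → s < t → ψ s = 0)
    (ht2 : t ≤ n / 2) :
    ∀ i, 1 ≤ i → i ≤ n →
      (t ∣ i → (i : ℂ) * ψ i = (t : ℂ) * ψ t) ∧ (¬ t ∣ i → ψ i = 0) := by
  
  -- key scalar relation
  have key : ∀ a b, 1 ≤ a → 1 ≤ b → a + b ≤ n →
      ψ a * ψ b = (ψ a + ψ b) * ψ (a + b) := by
    intro a b ha hb hab
    have han : a ≤ n := by omega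
    have hbn : b ≤ n := by omega
    have h := hRB (nfE n a) (nfE n b)
    rw [hP a ha han, hP b hb hbn] at h
    simp only [nfMul_smul_left, nfMul_smul_right] at h
    rw [nfMul_e ha han hb hbn, ← add_smul, map_smul, hP (a+b) (by omega) hab,
      smul_smul, smul_smul] at h
    have h2 := congrFun h ⟨a + b - 1, by omega⟩
    rw [Pi.smul_apply, Pi.smul_apply, nfE_self (by omega) hab] at h2
    simp only [smul_eq_mul, mul_one] at h2
    linear_combination h2
  intro i
  induction i using Nat.strong_induction_on with
  | _ i IH =>
    intro hi1 hin
    rcases lt_trichotomy i t with hlt | heq | hgt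
    · constructor
      · intro hd
        exact absurd (Nat.le_of_dvd (by omega) hd) (by omega)
      · intro _; exact hleast i hi1 hlt
    · subst heq
      exact ⟨fun _ => rfl, fun h => absurd dvd_rfl h⟩
    · set j := i - t with hj
      have hj1 : 1 ≤ j := by omega
      have hji : j + t = i := by omega
      have krel : ψ j * ψ t = (ψ j + ψ t) * ψ i := by
        have := key j t hj1 ht1 (by omega)
        rwa [hji] at this
      have IHj := IH j (by omega) hj1 (by omega)
      constructor
      · intro hd
        have hdj : t ∣ j := (Nat.dvd_sub hd dvd_rfl)
        have hjψ := IHj.1 hdj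
        have hicast : (i : ℂ) = (j : ℂ) + t := by
          rw [← hji]; push_cast; ring
        have h3 : ψ t * ((i : ℂ) * ψ i) = ψ t * ((t : ℂ) * ψ t) := by
          rw [hicast]
          linear_combination (-(j : ℂ)) * krel + (ψ t - ψ i) * hjψ
        exact mul_left_cancel₀ hψt h3
      · intro hd
        have hdj : ¬ t ∣ j := fun h => hd (by rw [← hji]; exact Nat.dvd_add h dvd_rfl)
        have hjz := IHj.2 hdj
        rw [hjz, zero_mul, zero_add] at krel
        exact (mul_eq_zero.mp krel.symm).resolve_left hψt
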